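/- Consider the system of three quaternion matrix equations A_i X_i + Y_i B_i + C_i Z_i D_i + F_i Z_{i+1} G_i = E_i (i = 1, 2, 3) in the unknowns X₁, X₂, X₃, Y₁, Y₂, Y₃, Z₁, Z₂, Z₃, Z₄, where A_i ∈ ℍ^{m×k_i}, B_i ∈ ℍ^{o_i×n}, C_i, F_i ∈ ℍ^{m×q}, D_i, G_i ∈ ℍ^{p×n}, E_i ∈ ℍ^{m×n}, and the unknowns Z_i ∈ ℍ^{q×p} are shared between consecutive equations. Let 𝒟_i = (A_i, B_i, C_i, D_i, F_i, G_i, E_i). If each 𝒟_i (i = 1, 2, 3) satisfies the consistency conditions, each of the coupled data couple(𝒟₁, 𝒟₂) and couple(𝒟₂, 𝒟₃) satisfies the consistency conditions, and the doubly coupled data couple(couple(𝒟₁, 𝒟₂), couple(𝒟₂, 𝒟₃)) satisfies the consistency conditions, then the system has a solution. -/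

import Mathlib

open Matrix

noncomputable section

/-- The four Penrose equations over the quaternions: `X` is a Moore–Penrose
inverse of `A`. -/
def IsMP {m n : Type} [Fintype m] [Fintype n]
    (A : Matrix m n (Quaternion ℝ)) (X : Matrix n m (Quaternion ℝ)) : Prop :=
  A * X * A = A ∧ X * A * X = X ∧ (A * X)ᴴ = A * X ∧ (X * A)ᴴ = X * A

open scoped Classical

/-- `mp A` is the Moore–Penrose inverse `A†` of `A` (it exists and is unique for
quaternion matrices). -/
def mp {m n : Type} [Fintype m] [Fintype n]
    (A : Matrix m n (Quaternion ℝ)) : Matrix n m (Quaternion ℝ) :=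
  if h : ∃ X, IsMP A X then h.choose else 0

/-- `projL A = L_A = 1 - A† A`. -/
def projL {m n : Type} [Fintype m] [Fintype n] [DecidableEq n]
    (A : Matrix m n (Quaternion ℝ)) : Matrix n n (Quaternion ℝ) :=
  1 - mp A * A

/-- `projR A = R_A = 1 - A A†`. -/
def projR {m n : Type} [Fintype m] [Fintype n] [DecidableEq m]
    (A : Matrix m n (Quaternion ℝ)) : Matrix m m (Quaternion ℝ) :=
  1 - A * mp A

/-- The data `𝒟 = (A, B, C, D, F, G, E)` of a four-term equation
`A X + Y B + C Z D + F W G = E` with `A : m×k`, `B : o×n`, `C : m×q`, `D : p×n`,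
`F : m×l`, `G : s×n`, `E : m×n`. -/
structure QData (m k o n q p l s : Type) where
  A : Matrix m k (Quaternion ℝ)
  B : Matrix o n (Quaternion ℝ)
  C : Matrix m q (Quaternion ℝ)
  D : Matrix p n (Quaternion ℝ)
  F : Matrix m l (Quaternion ℝ)
  G : Matrix s n (Quaternion ℝ)
  E : Matrix m n (Quaternion ℝ)

namespace QData

variable {m k o n q p l s : Type}
  [Fintype m] [Fintype k] [Fintype o] [Fintype n] [Fintype q] [Fintype p]
  [Fintype l] [Fintype s]
  [DecidableEq m] [DecidableEq k] [DecidableEq o] [DecidableEq n]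
  [DecidableEq q] [DecidableEq p] [DecidableEq l] [DecidableEq s]

/-- `A₀ = R_A C`. -/
def A0 (d : QData m k o n q p l s) : Matrix m q (Quaternion ℝ) := projR d.A * d.C

/-- `B₀ = D L_B`. -/
def B0 (d : QData m k o n q p l s) : Matrix p n (Quaternion ℝ) := d.D * projL d.B

/-- `C₀ = R_A F`. -/
def C0 (d : QData m k o n q p l s) : Matrix m l (Quaternion ℝ) := projR d.A * d.F

/-- `D₀ = G L_B`. -/
def D0 (d : QData m k o n q p l s) : Matrix s n (Quaternion ℝ) := d.G * projL d.B

/-- `E₀ = R_A E L_B`. -/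
def E0 (d : QData m k o n q p l s) : Matrix m n (Quaternion ℝ) := projR d.A * d.E * projL d.B

/-- `M = R_{A₀} C₀`. -/
def M (d : QData m k o n q p l s) : Matrix m l (Quaternion ℝ) := projR d.A0 * d.C0

/-- `N = D₀ L_{B₀}`. -/
def N (d : QData m k o n q p l s) : Matrix s n (Quaternion ℝ) := d.D0 * projL d.B0

/-- `S = C₀ L_M`. -/
def S (d : QData m k o n q p l s) : Matrix m l (Quaternion ℝ) := d.C0 * projL d.M

/-- The consistency conditions
`R_M R_{A₀} E₀ = 0`, `E₀ L_{B₀} L_N = 0`, `R_{A₀} E₀ L_{D₀} = 0`, `R_{C₀} E₀ L_{B₀} = 0`. -/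
def Consistent (d : QData m k o n q p l s) : Prop :=
  projR d.M * projR d.A0 * d.E0 = 0 ∧
  d.E0 * projL d.B0 * projL d.N = 0 ∧
  projR d.A0 * d.E0 * projL d.D0 = 0 ∧
  projR d.C0 * d.E0 * projL d.B0 = 0

/-- The coupled data `couple(𝒟, 𝒟')` of two four-term data sharing row/column spaces. -/
def couple {k' o' l' s' : Type}
    [Fintype k'] [Fintype o'] [Fintype l'] [Fintype s']
    [DecidableEq k'] [DecidableEq o'] [DecidableEq l'] [DecidableEq s']
    (d : QData m k o n q p l s) (d' : QData m k' o' n l s l' s') :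
    QData l (l ⊕ l) (s ⊕ s) s l s l' s' where
  A := Matrix.fromCols (projL d.M * projL d.S) (-(projL d'.A0))
  B := Matrix.fromRows (projR d.D0) (-(projR d'.B0))
  C := projL d.M
  D := projR d.N
  F := mp d'.A0 * d'.S
  G := projR d'.N * d'.D0 * mp d'.B0
  E := mp d.M * d.E0 * mp d.D0 + mp d.S * d.S * mp d.C0 * d.E0 * mp d.N
      - mp d'.A0 * d'.E0 * mp d'.B0
      + mp d'.A0 * d'.C0 * mp d'.M * d'.E0 * mp d'.B0
      + mp d'.A0 * d'.S * mp d'.C0 * d'.E0 * mp d'.N * d'.D0 * mp d'.B0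

end QData

/-!
An equation `A X + Y B + C Z D + F W G = E` can be solved for `X, Y` as soon as `(Z, W)` solves the
reduced equation `A₀ Z B₀ + C₀ W D₀ = E₀`. Under the consistency conditions every pair drawn from
the explicit general solution `(zFamily V, wFamily V)` of the reduced equation does, and a solution
`(X, Y, Z, W)` of `couple(𝒟, 𝒟')` says precisely that the `W`-family of `𝒟` with parameter `-Z`
meets the `Z`-family of `𝒟'` with parameter `-W`. Solving the doubly coupled equation and then the
two coupled ones thus yields shared unknowns `Z₂`, `Z₃` lying in families of `𝒟₁, 𝒟₂, 𝒟₃` with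
matching parameters, and each of the three equations is solved by its own family.

Moore–Penrose inverses exist by Penrose's argument: `T = Aᴴ A` satisfies `T = T² q(T)` for a real
polynomial `q`, and then `A† = q(T) Aᴴ`.
-/

local notation "ℍ" => Quaternion ℝ

open Polynomial

instance : StarModule ℝ ℍ := ⟨fun r a => by ext <;> simp⟩

section Properness

variable {m n p : Type} [Fintype m]

theorem eq_zero_of_conjTranspose_mul_self_eq_zero {A : Matrix m n ℍ} (h : Aᴴ * A = 0) :
    A = 0 := by
  refine Matrix.ext fun i j => ?_
  have hjj : ((∑ i, Quaternion.normSq (A i j) : ℝ) : ℍ) = 0 := by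
    simpa [Matrix.mul_apply, Quaternion.star_mul_self, ← Quaternion.algebraMap_def]
      using congrFun (congrFun h j) j
  rw [← Quaternion.coe_zero, Quaternion.coe_inj,
    Fintype.sum_eq_zero_iff_of_nonneg fun _ => Quaternion.normSq_nonneg] at hjj
  simpa using congrFun hjj i

theorem mul_eq_zero_of_conjTranspose_mul_self_mul_eq_zero [Fintype n] [Fintype p]
    {A : Matrix m n ℍ} {B : Matrix n p ℍ} (h : Aᴴ * A * B = 0) : A * B = 0 := by
  apply eq_zero_of_conjTranspose_mul_self_eq_zero
  rw [conjTranspose_mul, Matrix.mul_assoc, ← Matrix.mul_assoc Aᴴ, h, Matrix.mul_zero]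

theorem Matrix.IsHermitian.mul_eq_zero_of_pow_mul_eq_zero [Fintype p] [DecidableEq m]
    {T : Matrix m m ℍ} (hT : T.IsHermitian) {Y : Matrix m p ℍ} (k : ℕ)
    (h : T ^ (k + 1) * Y = 0) : T * Y = 0 := by
  induction k with
  | zero => simpa using h
  | succ k ih =>
    apply ih
    rw [pow_succ', Matrix.mul_assoc]
    apply mul_eq_zero_of_conjTranspose_mul_self_mul_eq_zero
    simpa only [hT.eq, pow_succ', Matrix.mul_assoc] using h

end Properness

theorem Matrix.IsHermitian.isHermitian_aeval {n : Type} [Fintype n] [DecidableEq n]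
    {T : Matrix n n ℍ} (hT : T.IsHermitian) (q : ℝ[X]) : (aeval T q).IsHermitian := by
  rw [aeval_eq_sum_range]
  exact isSelfAdjoint_sum _ fun i _ => (IsSelfAdjoint.all _).smul (hT.isSelfAdjoint.pow i)

theorem Matrix.IsHermitian.exists_eq_mul_self_mul_aeval {n : Type} [Fintype n] [DecidableEq n]
    {T : Matrix n n ℍ} (hT : T.IsHermitian) : ∃ q : ℝ[X], T = T * T * aeval T q := by
  -- `minpoly T = X ^ k * r` with `r 0 ≠ 0`; as `T` is hermitian, `T ^ (k + 1) r(T) = 0`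
  -- already forces `T r(T) = 0`, which rearranges to `T = T² q(T)`.
  obtain ⟨r, hpr, hr⟩ := exists_eq_pow_rootMultiplicity_mul_and_not_dvd (minpoly ℝ T)
    (minpoly.ne_zero (Algebra.IsIntegral.isIntegral T)) 0
  set c := r.coeff 0
  have hc : c ≠ 0 := by simpa [X_dvd_iff] using hr
  have hTr : T * aeval T r = 0 := by
    apply hT.mul_eq_zero_of_pow_mul_eq_zero (rootMultiplicity 0 (minpoly ℝ T))
    have h := minpoly.aeval ℝ T
    rw [hpr, map_mul, map_pow, map_sub, aeval_X, aeval_C, map_zero, sub_zero] at h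
    rw [pow_succ', Matrix.mul_assoc, h, Matrix.mul_zero]
  refine ⟨-C c⁻¹ * r.divX, ?_⟩
  have hpoly : X ^ 2 * (-C c⁻¹ * r.divX) = X - C c⁻¹ * (X * r) := by
    have h1 : C c⁻¹ * C c = 1 := by rw [← C_mul, inv_mul_cancel₀ hc, C_1]
    linear_combination (-(C c⁻¹ * X)) * divX_mul_X_add r + X * h1
  calc T = aeval T (X - C c⁻¹ * (X * r)) := by simp [hTr]
    _ = T * T * aeval T (-C c⁻¹ * r.divX) := by rw [← hpoly, map_mul, map_pow, aeval_X, sq]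

theorem exists_isMP {m n : Type} [Fintype m] [Fintype n] (A : Matrix m n ℍ) : ∃ X, IsMP A X := by
  classical
  obtain ⟨q, hq⟩ := (isHermitian_conjTranspose_mul_self A).exists_eq_mul_self_mul_aeval
  set T := Aᴴ * A
  set u := aeval T q
  have hTu : T * u = u * T := by simpa [u] using ((Commute.all X q).map (aeval T)).eq
  have hu : uᴴ = u := (isHermitian_conjTranspose_mul_self A).isHermitian_aeval q
  have hAu : A * T * u = A := by
    have : A * (1 - T * u) = 0 := by
      apply mul_eq_zero_of_conjTranspose_mul_self_mul_eq_zero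
      rw [Matrix.mul_sub, Matrix.mul_one, ← Matrix.mul_assoc, ← hq, sub_self]
    rw [Matrix.mul_sub, Matrix.mul_one, sub_eq_zero, ← Matrix.mul_assoc] at this
    exact this.symm
  have huA : u * T * Aᴴ = Aᴴ := by
    simpa [T, hu, Matrix.mul_assoc] using congrArg conjTranspose hAu
  refine ⟨u * Aᴴ, ?_, ?_, ?_, ?_⟩
  · calc A * (u * Aᴴ) * A = A * (T * u) := by simp only [T, hTu, Matrix.mul_assoc]
      _ = A := by rw [← Matrix.mul_assoc, hAu]
  · calc u * Aᴴ * A * (u * Aᴴ) = u * (T * u * Aᴴ) := by simp only [T, Matrix.mul_assoc]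
      _ = u * Aᴴ := by rw [hTu, huA]
  · simp only [conjTranspose_mul, conjTranspose_conjTranspose, hu, Matrix.mul_assoc]
  · calc (u * Aᴴ * A)ᴴ = T * u := by
          rw [Matrix.mul_assoc, conjTranspose_mul, hu, (isHermitian_conjTranspose_mul_self A).eq]
      _ = u * Aᴴ * A := by rw [hTu, Matrix.mul_assoc]

theorem mp_isMP {m n : Type} [Fintype m] [Fintype n] (A : Matrix m n ℍ) : IsMP A (mp A) := by
  rw [mp, dif_pos (exists_isMP A)]
  exact (exists_isMP A).choose_spec

section MoorePenrose

variable {m n : Type} [Fintype m] [Fintype n] (A : Matrix m n ℍ)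

theorem mul_mp_mul_self : A * mp A * A = A := (mp_isMP A).1

theorem mp_mul_self_mul_mp : mp A * A * mp A = mp A := (mp_isMP A).2.1

theorem conjTranspose_mul_mp : (A * mp A)ᴴ = A * mp A := (mp_isMP A).2.2.1

theorem conjTranspose_mp_mul_self : (mp A * A)ᴴ = mp A * A := (mp_isMP A).2.2.2

theorem projR_mul_self [DecidableEq m] : projR A * A = 0 := by
  rw [projR, Matrix.sub_mul, Matrix.one_mul, mul_mp_mul_self, sub_self]

theorem self_mul_projL [DecidableEq n] : A * projL A = 0 := by
  rw [projL, Matrix.mul_sub, Matrix.mul_one, ← Matrix.mul_assoc, mul_mp_mul_self, sub_self]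

theorem mp_mul_self_eq_one_sub_projL [DecidableEq n] : mp A * A = 1 - projL A :=
  (sub_sub_cancel _ _).symm

theorem isHermitian_projR [DecidableEq m] : (projR A).IsHermitian := by
  rw [IsHermitian, projR, conjTranspose_sub, conjTranspose_one, conjTranspose_mul_mp]

theorem isHermitian_projL [DecidableEq n] : (projL A).IsHermitian := by
  rw [IsHermitian, projL, conjTranspose_sub, conjTranspose_one, conjTranspose_mp_mul_self]

theorem projR_mul_projR [DecidableEq m] : projR A * projR A = projR A := by
  nth_rw 2 [projR]
  rw [Matrix.mul_sub, Matrix.mul_one, ← Matrix.mul_assoc, projR_mul_self, Matrix.zero_mul,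
    sub_zero]

theorem projL_mul_projL [DecidableEq n] : projL A * projL A = projL A := by
  nth_rw 1 [projL]
  rw [Matrix.sub_mul, Matrix.one_mul, Matrix.mul_assoc, self_mul_projL, Matrix.mul_zero, sub_zero]

variable {A}

theorem mp_mul_eq_mp_of_mul_eq {P : Matrix m m ℍ} (hP : P.IsHermitian) (h : P * A = A) :
    mp A * P = mp A := by
  have hAP : A * mp A * P = A * mp A :=
    calc A * mp A * P = (P * (A * mp A))ᴴ := by
          rw [conjTranspose_mul, hP.eq, conjTranspose_mul_mp]
      _ = A * mp A := by rw [← Matrix.mul_assoc, h, conjTranspose_mul_mp]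
  rw [← mp_mul_self_mul_mp, Matrix.mul_assoc, Matrix.mul_assoc, ← Matrix.mul_assoc A, hAP,
    ← Matrix.mul_assoc]

theorem mul_mp_eq_mp_of_mul_eq {P : Matrix n n ℍ} (hP : P.IsHermitian) (h : A * P = A) :
    P * mp A = mp A := by
  have hPA : P * (mp A * A) = mp A * A :=
    calc P * (mp A * A) = (mp A * A * P)ᴴ := by
          rw [conjTranspose_mul, hP.eq, conjTranspose_mp_mul_self]
      _ = mp A * A := by rw [Matrix.mul_assoc, h, conjTranspose_mp_mul_self]
  rw [← mp_mul_self_mul_mp, ← Matrix.mul_assoc, hPA]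

end MoorePenrose

theorem exists_mul_add_mul_eq {m n k o : Type} [Fintype m] [Fintype n] [Fintype k] [Fintype o]
    [DecidableEq m] [DecidableEq n] (A : Matrix m k ℍ) (B : Matrix o n ℍ) (T : Matrix m n ℍ)
    (h : projR A * T * projL B = 0) :
    ∃ (X : Matrix k n ℍ) (Y : Matrix m o ℍ), A * X + Y * B = T := by
  refine ⟨mp A * T, projR A * T * mp B, ?_⟩
  have hA : A * (mp A * T) = T - projR A * T := by
    rw [projR, Matrix.sub_mul, Matrix.one_mul, sub_sub_cancel, Matrix.mul_assoc]
  have hB : projR A * T * mp B * B = projR A * T - projR A * T * projL B := by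
    rw [projL, Matrix.mul_sub, Matrix.mul_one, sub_sub_cancel, Matrix.mul_assoc]
  rw [hA, hB, h, sub_zero, sub_add_cancel]

namespace QData

variable {m k o n q p l s : Type} (d : QData m k o n q p l s)

def Solves [Fintype k] [Fintype o] [Fintype q] [Fintype p] [Fintype l] [Fintype s]
    (Z : Matrix q p ℍ) (W : Matrix l s ℍ) : Prop :=
  ∃ (X : Matrix k n ℍ) (Y : Matrix m o ℍ),
    d.A * X + Y * d.B + d.C * Z * d.D + d.F * W * d.G = d.E

section

variable [Fintype m] [Fintype k] [Fintype q] [Fintype l] [DecidableEq m]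

theorem A0_mul_mp_A0_mul_S [DecidableEq l] : d.A0 * mp d.A0 * d.S = d.S := by
  have h : projR d.A0 * d.S = 0 := by
    rw [S, ← Matrix.mul_assoc, ← M, self_mul_projL]
  rwa [projR, Matrix.sub_mul, Matrix.one_mul, sub_eq_zero, eq_comm] at h

theorem mp_M_mul_projR_A0 : mp d.M * projR d.A0 = mp d.M :=
  mp_mul_eq_mp_of_mul_eq (isHermitian_projR _) (by rw [M, ← Matrix.mul_assoc, projR_mul_projR])

theorem mp_M_mul_C0 : mp d.M * d.C0 = mp d.M * d.M :=
  calc mp d.M * d.C0 = mp d.M * projR d.A0 * d.C0 := by rw [mp_M_mul_projR_A0]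
    _ = mp d.M * d.M := Matrix.mul_assoc _ _ _

theorem C0_mul_mp_S [DecidableEq l] : d.C0 * mp d.S = d.S * mp d.S := by
  have h : projL d.M * mp d.S = mp d.S :=
    mul_mp_eq_mp_of_mul_eq (isHermitian_projL _) (by rw [S, Matrix.mul_assoc, projL_mul_projL])
  calc d.C0 * mp d.S = d.C0 * projL d.M * mp d.S := by rw [Matrix.mul_assoc, h]
    _ = d.S * mp d.S := rfl

end

section

variable [Fintype n] [Fintype o] [Fintype p] [DecidableEq n]

theorem projL_B0_mul_mp_N [Fintype s] : projL d.B0 * mp d.N = mp d.N :=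
  mul_mp_eq_mp_of_mul_eq (isHermitian_projL _) (by rw [N, Matrix.mul_assoc, projL_mul_projL])

theorem D0_mul_mp_B0_mul_B0 : d.D0 * (mp d.B0 * d.B0) = d.D0 - d.N := by
  rw [N, projL, Matrix.mul_sub, Matrix.mul_one, sub_sub_cancel]

end

section

variable [Fintype m] [Fintype k] [Fintype o] [Fintype n] [Fintype q] [Fintype p]
  [Fintype l] [Fintype s] [DecidableEq m] [DecidableEq n]

theorem solves_of_reduced {Z : Matrix q p ℍ} {W : Matrix l s ℍ}
    (h : d.A0 * Z * d.B0 + d.C0 * W * d.D0 = d.E0) : d.Solves Z W := by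
  obtain ⟨X, Y, hXY⟩ := exists_mul_add_mul_eq d.A d.B (d.E - d.C * Z * d.D - d.F * W * d.G) (by
    rw [← sub_eq_zero.mpr h.symm]
    simp only [A0, B0, C0, D0, E0, Matrix.mul_sub, Matrix.sub_mul, Matrix.mul_assoc]
    abel)
  exact ⟨X, Y, by rw [hXY]; abel⟩

variable {d}

theorem Consistent.M_mul_mp_M_mul_E0 (hd : d.Consistent) :
    d.M * mp d.M * d.E0 = projR d.A0 * d.E0 := by
  have h := hd.1
  rw [projR, Matrix.sub_mul, Matrix.sub_mul, Matrix.one_mul, sub_eq_zero, Matrix.mul_assoc d.M,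
    mp_M_mul_projR_A0] at h
  exact h.symm

theorem Consistent.mp_M_mul_E0_mul_mp_D0_mul_D0 (hd : d.Consistent) :
    mp d.M * d.E0 * mp d.D0 * d.D0 = mp d.M * d.E0 := by
  have h : mp d.M * d.E0 * projL d.D0 = 0 :=
    calc mp d.M * d.E0 * projL d.D0 = mp d.M * (projR d.A0 * d.E0 * projL d.D0) := by
          conv_lhs => rw [← mp_M_mul_projR_A0]
          simp only [Matrix.mul_assoc]
      _ = 0 := by rw [hd.2.2.1, Matrix.mul_zero]
  rw [Matrix.mul_assoc, mp_mul_self_eq_one_sub_projL, Matrix.mul_sub, Matrix.mul_one, h, sub_zero]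

theorem Consistent.E0_mul_projL_B0 (hd : d.Consistent) :
    d.E0 * projL d.B0 = d.C0 * (mp d.C0 * d.E0 * mp d.N * d.N) := by
  have hN : d.E0 * projL d.B0 = d.E0 * mp d.N * d.N := by
    have h := hd.2.1
    rw [show projL d.N = 1 - mp d.N * d.N from rfl, Matrix.mul_sub, Matrix.mul_one,
      sub_eq_zero] at h
    rw [h, ← Matrix.mul_assoc, Matrix.mul_assoc d.E0, projL_B0_mul_mp_N]
  have hC : d.E0 * projL d.B0 = d.C0 * mp d.C0 * (d.E0 * projL d.B0) := by
    have h := hd.2.2.2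
    rw [projR, Matrix.sub_mul, Matrix.sub_mul, Matrix.one_mul, sub_eq_zero] at h
    rw [← Matrix.mul_assoc, ← h]
  rw [hC, hN]
  simp only [Matrix.mul_assoc]

end

section

variable [Fintype m] [Fintype k] [Fintype o] [Fintype n] [Fintype q] [Fintype p]
  [Fintype l] [Fintype s] [DecidableEq m] [DecidableEq n] [DecidableEq l]

def Zp : Matrix q p ℍ :=
  mp d.A0 * d.E0 * mp d.B0 - mp d.A0 * d.C0 * mp d.M * d.E0 * mp d.B0
    - mp d.A0 * d.S * mp d.C0 * d.E0 * mp d.N * d.D0 * mp d.B0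

def Wp : Matrix l s ℍ :=
  mp d.M * d.E0 * mp d.D0 + mp d.S * d.S * mp d.C0 * d.E0 * mp d.N

/-- With `wFamily`, the paper's general solution of `A₀ Z B₀ + C₀ W D₀ = E₀`: `Z ∈ zFamily V`,
`W ∈ wFamily V` for one common parameter `V`. -/
def zFamily [DecidableEq q] [DecidableEq p] [DecidableEq s] (V : Matrix l s ℍ) :
    Set (Matrix q p ℍ) :=
  {Z | ∃ U₁ U₂ : Matrix q p ℍ, Z = d.Zp - mp d.A0 * d.S * V * (projR d.N * d.D0 * mp d.B0)
    + projL d.A0 * U₁ + U₂ * projR d.B0}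

def wFamily [DecidableEq s] (V : Matrix l s ℍ) : Set (Matrix l s ℍ) :=
  {W | ∃ V₁ V₂ : Matrix l s ℍ, W = d.Wp + projL d.M * projL d.S * V₁ + V₂ * projR d.D0
    + projL d.M * V * projR d.N}

variable {d}

theorem A0_mul_Zp_mul_B0 : d.A0 * d.Zp * d.B0 = d.A0 * mp d.A0 * d.E0 * (mp d.B0 * d.B0)
    - d.A0 * mp d.A0 * (d.C0 * mp d.M * d.E0) * (mp d.B0 * d.B0)
    - d.S * mp d.C0 * d.E0 * mp d.N * (d.D0 * (mp d.B0 * d.B0)) := by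
  rw [Zp]
  simp only [Matrix.mul_sub, Matrix.sub_mul, ← Matrix.mul_assoc, A0_mul_mp_A0_mul_S]

theorem Consistent.C0_mul_Wp_mul_D0 (hd : d.Consistent) :
    d.C0 * d.Wp * d.D0 = d.C0 * mp d.M * d.E0 + d.S * mp d.C0 * d.E0 * mp d.N * d.D0 := by
  rw [Wp, Matrix.mul_add, Matrix.add_mul]
  congr 1
  · calc d.C0 * (mp d.M * d.E0 * mp d.D0) * d.D0
        = d.C0 * (mp d.M * d.E0 * mp d.D0 * d.D0) := by simp only [Matrix.mul_assoc]
      _ = d.C0 * mp d.M * d.E0 := by rw [hd.mp_M_mul_E0_mul_mp_D0_mul_D0, Matrix.mul_assoc]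
  · simp only [← Matrix.mul_assoc, C0_mul_mp_S, mul_mp_mul_self]

theorem Consistent.reduced_Zp_Wp (hd : d.Consistent) :
    d.A0 * d.Zp * d.B0 + d.C0 * d.Wp * d.D0 = d.E0 := by
  have hCM : d.C0 * mp d.M * d.E0 - d.A0 * mp d.A0 * (d.C0 * mp d.M * d.E0)
      = d.E0 - d.A0 * mp d.A0 * d.E0 :=
    calc _ = d.M * mp d.M * d.E0 := by
          rw [M, projR, Matrix.sub_mul, Matrix.one_mul]
          simp only [Matrix.sub_mul, Matrix.mul_assoc]
      _ = projR d.A0 * d.E0 := hd.M_mul_mp_M_mul_E0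
      _ = _ := by rw [projR, Matrix.sub_mul, Matrix.one_mul]
  have hL : d.A0 * mp d.A0 * (d.E0 - d.C0 * mp d.M * d.E0) * projL d.B0
      = d.S * mp d.C0 * d.E0 * mp d.N * d.N :=
    calc _ = d.A0 * mp d.A0 * (d.E0 * projL d.B0 - d.C0 * mp d.M * (d.E0 * projL d.B0)) := by
          rw [Matrix.mul_assoc (d.A0 * mp d.A0), Matrix.sub_mul, Matrix.mul_assoc (d.C0 * mp d.M)]
      _ = d.A0 * mp d.A0 * (d.C0 * projL d.M * (mp d.C0 * d.E0 * mp d.N * d.N)) := by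
          rw [hd.E0_mul_projL_B0, projL, Matrix.mul_sub d.C0, Matrix.mul_one, Matrix.sub_mul,
            ← mp_M_mul_C0]
          simp only [Matrix.mul_assoc]
      _ = _ := by
          rw [← Matrix.mul_assoc, ← S, A0_mul_mp_A0_mul_S]
          simp only [Matrix.mul_assoc]
  calc d.A0 * d.Zp * d.B0 + d.C0 * d.Wp * d.D0
      = d.E0 + (d.S * mp d.C0 * d.E0 * mp d.N * d.N
          - d.A0 * mp d.A0 * (d.E0 - d.C0 * mp d.M * d.E0) * projL d.B0)
        + (d.C0 * mp d.M * d.E0 - d.A0 * mp d.A0 * (d.C0 * mp d.M * d.E0)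
          - (d.E0 - d.A0 * mp d.A0 * d.E0)) := by
        rw [A0_mul_Zp_mul_B0, hd.C0_mul_Wp_mul_D0, D0_mul_mp_B0_mul_B0,
          mp_mul_self_eq_one_sub_projL]
        simp only [Matrix.mul_sub, Matrix.sub_mul, Matrix.mul_one, Matrix.mul_assoc]
        abel
    _ = d.E0 := by rw [hL, hCM, sub_self, sub_self, add_zero, add_zero]

variable [DecidableEq s]

theorem Consistent.reduced_eq_of_mem [DecidableEq q] [DecidableEq p] (hd : d.Consistent)
    {V : Matrix l s ℍ} {Z : Matrix q p ℍ} {W : Matrix l s ℍ} (hZ : Z ∈ d.zFamily V)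
    (hW : W ∈ d.wFamily V) : d.A0 * Z * d.B0 + d.C0 * W * d.D0 = d.E0 := by
  obtain ⟨U₁, U₂, rfl⟩ := hZ
  obtain ⟨V₁, V₂, rfl⟩ := hW
  have hU₁ : d.A0 * (projL d.A0 * U₁) * d.B0 = 0 := by
    rw [← Matrix.mul_assoc, self_mul_projL, Matrix.zero_mul, Matrix.zero_mul]
  have hU₂ : d.A0 * (U₂ * projR d.B0) * d.B0 = 0 := by
    rw [Matrix.mul_assoc, Matrix.mul_assoc, projR_mul_self, Matrix.mul_zero, Matrix.mul_zero]
  have hV₁ : d.C0 * (projL d.M * projL d.S * V₁) * d.D0 = 0 := by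
    rw [← Matrix.mul_assoc, ← Matrix.mul_assoc, ← S, self_mul_projL, Matrix.zero_mul,
      Matrix.zero_mul]
  have hV₂ : d.C0 * (V₂ * projR d.D0) * d.D0 = 0 := by
    rw [Matrix.mul_assoc, Matrix.mul_assoc, projR_mul_self, Matrix.mul_zero, Matrix.mul_zero]
  have hV : d.A0 * (mp d.A0 * d.S * V * (projR d.N * d.D0 * mp d.B0)) * d.B0
      = d.C0 * (projL d.M * V * projR d.N) * d.D0 :=
    calc _ = d.A0 * mp d.A0 * d.S * V * (projR d.N * (d.D0 * (mp d.B0 * d.B0))) := by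
          simp only [Matrix.mul_assoc]
      _ = d.S * V * (projR d.N * d.D0) := by
          rw [A0_mul_mp_A0_mul_S, D0_mul_mp_B0_mul_B0, Matrix.mul_sub, projR_mul_self, sub_zero]
      _ = _ := by simp only [S, Matrix.mul_assoc]
  simp only [Matrix.mul_add, Matrix.add_mul, Matrix.mul_sub, Matrix.sub_mul]
  rw [hU₁, hU₂, hV₁, hV₂, hV, ← hd.reduced_Zp_Wp]
  abel

theorem Consistent.solves_of_mem [DecidableEq q] [DecidableEq p] (hd : d.Consistent)
    {V : Matrix l s ℍ} {Z : Matrix q p ℍ} {W : Matrix l s ℍ} (hZ : Z ∈ d.zFamily V)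
    (hW : W ∈ d.wFamily V) : d.Solves Z W :=
  d.solves_of_reduced (hd.reduced_eq_of_mem hZ hW)

theorem Solves.wFamily_inter_zFamily_nonempty {k' o' l' s' : Type}
    [Fintype k'] [Fintype o'] [Fintype l'] [Fintype s']
    [DecidableEq k'] [DecidableEq o'] [DecidableEq l'] [DecidableEq s']
    {d' : QData m k' o' n l s l' s'} {Z : Matrix l s ℍ} {W : Matrix l' s' ℍ}
    (h : (d.couple d').Solves Z W) : (d.wFamily (-Z) ∩ d'.zFamily (-W)).Nonempty := by
  obtain ⟨X, Y, hXY⟩ := h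
  have hX : (d.couple d').A * X
      = projL d.M * projL d.S * X.toRows₁ - projL d'.A0 * X.toRows₂ := by
    conv_lhs => rw [← fromRows_toRows X]
    simp only [couple, fromCols_mul_fromRows, Matrix.neg_mul, sub_eq_add_neg]
  have hY : Y * (d.couple d').B = Y.toCols₁ * projR d.D0 - Y.toCols₂ * projR d'.B0 := by
    conv_lhs => rw [← fromCols_toCols Y]
    simp only [couple, fromCols_mul_fromRows, Matrix.mul_neg, sub_eq_add_neg]
  refine ⟨_, ⟨-X.toRows₁, -Y.toCols₁, rfl⟩, -X.toRows₂, -Y.toCols₂, ?_⟩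
  rw [hX, hY] at hXY
  simp only [couple] at hXY
  rw [← sub_eq_zero, ← neg_eq_zero, ← sub_eq_zero.mpr hXY, Wp, Zp]
  simp only [Matrix.mul_neg, Matrix.neg_mul]
  abel

end

end QData

/-- If each data, each coupled data and the doubly coupled data satisfy the
consistency conditions, then the system
`Aᵢ Xᵢ + Yᵢ Bᵢ + Cᵢ Zᵢ Dᵢ + Fᵢ Z_{i+1} Gᵢ = Eᵢ` (i = 1, 2, 3) is solvable. -/
theorem system_three_solvable_sufficient {m n q p k₁ k₂ k₃ o₁ o₂ o₃ : Type}
    [Fintype m] [Fintype n] [Fintype q] [Fintype p]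
    [Fintype k₁] [Fintype k₂] [Fintype k₃] [Fintype o₁] [Fintype o₂] [Fintype o₃]
    [DecidableEq m] [DecidableEq n] [DecidableEq q] [DecidableEq p]
    [DecidableEq k₁] [DecidableEq k₂] [DecidableEq k₃]
    [DecidableEq o₁] [DecidableEq o₂] [DecidableEq o₃]
    (A₁ : Matrix m k₁ (Quaternion ℝ)) (A₂ : Matrix m k₂ (Quaternion ℝ))
    (A₃ : Matrix m k₃ (Quaternion ℝ))
    (B₁ : Matrix o₁ n (Quaternion ℝ)) (B₂ : Matrix o₂ n (Quaternion ℝ))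
    (B₃ : Matrix o₃ n (Quaternion ℝ))
    (C₁ C₂ C₃ F₁ F₂ F₃ : Matrix m q (Quaternion ℝ))
    (D₁ D₂ D₃ G₁ G₂ G₃ : Matrix p n (Quaternion ℝ))
    (E₁ E₂ E₃ : Matrix m n (Quaternion ℝ))
    (h₁ : (QData.mk A₁ B₁ C₁ D₁ F₁ G₁ E₁).Consistent)
    (h₂ : (QData.mk A₂ B₂ C₂ D₂ F₂ G₂ E₂).Consistent)
    (h₃ : (QData.mk A₃ B₃ C₃ D₃ F₃ G₃ E₃).Consistent)
    (h₁₂ : ((QData.mk A₁ B₁ C₁ D₁ F₁ G₁ E₁).couple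
      (QData.mk A₂ B₂ C₂ D₂ F₂ G₂ E₂)).Consistent)
    (h₂₃ : ((QData.mk A₂ B₂ C₂ D₂ F₂ G₂ E₂).couple
      (QData.mk A₃ B₃ C₃ D₃ F₃ G₃ E₃)).Consistent)
    (h₁₂₂₃ : (((QData.mk A₁ B₁ C₁ D₁ F₁ G₁ E₁).couple (QData.mk A₂ B₂ C₂ D₂ F₂ G₂ E₂)).couple
      ((QData.mk A₂ B₂ C₂ D₂ F₂ G₂ E₂).couple (QData.mk A₃ B₃ C₃ D₃ F₃ G₃ E₃))).Consistent) :
    ∃ (X₁ : Matrix k₁ n (Quaternion ℝ)) (X₂ : Matrix k₂ n (Quaternion ℝ))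
      (X₃ : Matrix k₃ n (Quaternion ℝ))
      (Y₁ : Matrix m o₁ (Quaternion ℝ)) (Y₂ : Matrix m o₂ (Quaternion ℝ))
      (Y₃ : Matrix m o₃ (Quaternion ℝ))
      (Z₁ Z₂ Z₃ Z₄ : Matrix q p (Quaternion ℝ)),
      A₁ * X₁ + Y₁ * B₁ + C₁ * Z₁ * D₁ + F₁ * Z₂ * G₁ = E₁ ∧
      A₂ * X₂ + Y₂ * B₂ + C₂ * Z₂ * D₂ + F₂ * Z₃ * G₂ = E₂ ∧
      A₃ * X₃ + Y₃ * B₃ + C₃ * Z₃ * D₃ + F₃ * Z₄ * G₃ = E₃ := by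
  obtain ⟨V, hV₁₂, hV₂₃⟩ :=
    (h₁₂₂₃.solves_of_mem (V := 0) ⟨0, 0, rfl⟩ ⟨0, 0, rfl⟩).wFamily_inter_zFamily_nonempty
  obtain ⟨Z₂, hZ₂₁, hZ₂₂⟩ := (h₁₂.solves_of_mem ⟨0, 0, rfl⟩ hV₁₂).wFamily_inter_zFamily_nonempty
  obtain ⟨Z₃, hZ₃₂, hZ₃₃⟩ := (h₂₃.solves_of_mem hV₂₃ ⟨0, 0, rfl⟩).wFamily_inter_zFamily_nonempty
  obtain ⟨X₁, Y₁, e₁⟩ := h₁.solves_of_mem ⟨0, 0, rfl⟩ hZ₂₁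
  obtain ⟨X₂, Y₂, e₂⟩ := h₂.solves_of_mem hZ₂₂ hZ₃₂
  obtain ⟨X₃, Y₃, e₃⟩ := h₃.solves_of_mem hZ₃₃ ⟨0, 0, rfl⟩
  exact ⟨X₁, X₂, X₃, Y₁, Y₂, Y₃, _, Z₂, Z₃, _, e₁, e₂, e₃⟩
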